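/- For every x > 0 and u > 0, the Laplace transform of the first-passage density is ∫_0^∞ h(σ,x)·e^{-uσ} dσ = exp(x(1 - √(1 + 2u))). -/

import Mathlib

open Real MeasureTheory Set Filter Topology

noncomputable def fph (σ x : ℝ) : ℝ :=
  x * Real.exp (-(x - σ)^2 / (2*σ)) / Real.sqrt (2*Real.pi*σ^3)

noncomputable def erfc (z : ℝ) : ℝ :=
  (2 / Real.sqrt Real.pi) * ∫ t in Set.Ioi z, Real.exp (-t^2)

noncomputable def fpH (σ x : ℝ) : ℝ :=
  (1/2) * (erfc ((x-σ)/Real.sqrt (2*σ)) + Real.exp (2*x) * erfc ((x+σ)/Real.sqrt (2*σ)))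

noncomputable def kap (σ y x : ℝ) : ℝ :=
  Real.exp (-(y - x + σ)^2/(2*σ)) / Real.sqrt (2*Real.pi*σ) * (1 - Real.exp (-(2*x*y)/σ))

/-! Completing the square in the exponent turns `fph σ x * exp (-u * σ)` into
`exp (x * (1 - a)) * fphDrift a σ x` with `a = √(1 + 2u)`: the Laplace transform of the
first-passage density for drift `1` is an exponential tilt of the density for drift `a`.
The latter is a probability density because it is the derivative of the explicit
distribution function `fpHDrift a` (in terms of `erfc`), which tends to `0` as `σ → 0⁺` and
to `1` as `σ → ∞`. -/

theorem integral_Ioi_of_hasDerivAt_of_nonneg_of_tendsto {g g' : ℝ → ℝ} {a l₀ l : ℝ}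
    (hg₀ : Tendsto g (𝓝[>] a) (𝓝 l₀)) (hderiv : ∀ x ∈ Ioi a, HasDerivAt g (g' x) x)
    (hg'_nonneg : ∀ x ∈ Ioi a, 0 ≤ g' x) (hg : Tendsto g atTop (𝓝 l)) :
    ∫ x in Ioi a, g' x = l - l₀ := by
  classical
  set G := Function.update g a l₀
  have hG : ∀ x ∈ Ioi a, G x = g x := fun x hx => Function.update_of_ne hx.ne' _ _
  have hcont : ContinuousWithinAt G (Ici a) a := by
    rw [← continuousWithinAt_Ioi_iff_Ici, ContinuousWithinAt, show G a = l₀ from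
      Function.update_self ..]
    exact hg₀.congr' (eventually_nhdsWithin_of_forall fun x hx => (hG x hx).symm)
  have hderivG : ∀ x ∈ Ioi a, HasDerivAt G (g' x) x := fun x hx =>
    (hderiv x hx).congr_of_eventuallyEq (eventually_of_mem (Ioi_mem_nhds hx) hG)
  have hgG : Tendsto G atTop (𝓝 l) :=
    hg.congr' (eventually_of_mem (Ioi_mem_atTop a) fun x hx => (hG x hx).symm)
  simpa [G] using integral_Ioi_of_hasDerivAt_of_nonneg hcont hderivG hg'_nonneg hgG

section TailIntegral

variable {f : ℝ → ℝ}

theorem integral_Ioi_eq_sub_intervalIntegral (hf : Integrable f) (z : ℝ) :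
    ∫ t in Ioi z, f t = (∫ t in Ioi 0, f t) - ∫ t in 0..z, f t := by
  have hz := intervalIntegral.integral_Iic_add_Ioi (b := z) hf.integrableOn hf.integrableOn
  have h0 := intervalIntegral.integral_Iic_add_Ioi (b := 0) hf.integrableOn hf.integrableOn
  have hsub := intervalIntegral.integral_Iic_sub_Iic (a := 0) (b := z)
    hf.integrableOn hf.integrableOn
  linarith

theorem hasDerivAt_integral_Ioi (hf : Integrable f) {z : ℝ} (hfz : ContinuousAt f z) :
    HasDerivAt (fun z => ∫ t in Ioi z, f t) (-f z) z := by
  rw [funext (integral_Ioi_eq_sub_intervalIntegral hf)]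
  exact (intervalIntegral.integral_hasDerivAt_right hf.intervalIntegrable
    hf.aestronglyMeasurable.stronglyMeasurableAtFilter hfz).const_sub _

theorem tendsto_integral_Ioi_atTop (hf : Integrable f) :
    Tendsto (fun z => ∫ t in Ioi z, f t) atTop (𝓝 0) := by
  have hlim := (tendsto_const_nhds (x := ∫ t in Ioi 0, f t)).sub
    (intervalIntegral_tendsto_integral_Ioi 0 hf.integrableOn tendsto_id)
  rw [sub_self] at hlim
  exact hlim.congr fun z => (integral_Ioi_eq_sub_intervalIntegral hf z).symm

theorem tendsto_integral_Ioi_atBot (hf : Integrable f) :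
    Tendsto (fun z => ∫ t in Ioi z, f t) atBot (𝓝 (∫ t, f t)) := by
  have hsplit := intervalIntegral.integral_Iic_add_Ioi (b := 0) hf.integrableOn hf.integrableOn
  have hlim := (tendsto_const_nhds (x := ∫ t in Ioi 0, f t)).add
    (intervalIntegral_tendsto_integral_Iic 0 hf.integrableOn tendsto_id)
  rw [← hsplit, add_comm]
  refine hlim.congr fun z => ?_
  rw [integral_Ioi_eq_sub_intervalIntegral hf z, intervalIntegral.integral_symm, id,
    sub_eq_add_neg]

end TailIntegral

theorem integrable_exp_neg_sq : Integrable fun t : ℝ => exp (-t ^ 2) := by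
  simpa using integrable_exp_neg_mul_sq one_pos

theorem hasDerivAt_erfc (z : ℝ) : HasDerivAt erfc (-(2 / √π * exp (-z ^ 2))) z := by
  rw [← mul_neg]
  exact (hasDerivAt_integral_Ioi integrable_exp_neg_sq (by fun_prop)).const_mul _

theorem tendsto_erfc_atTop : Tendsto erfc atTop (𝓝 0) := by
  show Tendsto (fun z => 2 / √π * ∫ t in Ioi z, exp (-t ^ 2)) atTop (𝓝 0)
  simpa using (tendsto_integral_Ioi_atTop integrable_exp_neg_sq).const_mul (2 / √π)

theorem tendsto_erfc_atBot : Tendsto erfc atBot (𝓝 2) := by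
  show Tendsto (fun z => 2 / √π * ∫ t in Ioi z, exp (-t ^ 2)) atBot (𝓝 2)
  have h := (tendsto_integral_Ioi_atBot integrable_exp_neg_sq).const_mul (2 / √π)
  have hgauss : ∫ t, exp (-t ^ 2) = √π := by simpa using integral_gaussian 1
  rwa [hgauss, div_mul_cancel₀ _ (sqrt_pos.2 pi_pos).ne'] at h

noncomputable def fphDrift (a σ x : ℝ) : ℝ :=
  x * exp (-(x - a * σ) ^ 2 / (2 * σ)) / √(2 * π * σ ^ 3)

noncomputable def fpHDrift (a σ x : ℝ) : ℝ :=
  1 / 2 * (erfc ((x - a * σ) / √(2 * σ)) + exp (2 * a * x) * erfc ((x + a * σ) / √(2 * σ)))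

theorem fph_eq_fphDrift_one (σ x : ℝ) : fph σ x = fphDrift 1 σ x := by
  simp [fph, fphDrift]

theorem fphDrift_nonneg (a σ : ℝ) {x : ℝ} (hx : 0 ≤ x) : 0 ≤ fphDrift a σ x := by
  unfold fphDrift
  positivity

theorem fphDrift_mul_exp (a b x : ℝ) {σ : ℝ} (hσ : σ ≠ 0) :
    fphDrift b σ x * exp (-((a ^ 2 - b ^ 2) / 2) * σ) = exp (x * (b - a)) * fphDrift a σ x := by
  have hexp : exp (-(x - b * σ) ^ 2 / (2 * σ)) * exp (-((a ^ 2 - b ^ 2) / 2) * σ) =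
      exp (x * (b - a)) * exp (-(x - a * σ) ^ 2 / (2 * σ)) := by
    rw [← exp_add, ← exp_add]
    congr 1
    field_simp
    ring
  simp only [fphDrift, div_mul_eq_mul_div, mul_assoc, hexp]
  ring

theorem sqrt_two_mul_pi_mul_pow_three {σ : ℝ} (hσ : 0 ≤ σ) :
    √(2 * π * σ ^ 3) = √π * √(2 * σ) * σ := by
  rw [show 2 * π * σ ^ 3 = π * (2 * σ * σ ^ 2) by ring, sqrt_mul pi_pos.le,
    sqrt_mul (by positivity), sqrt_sq hσ, mul_assoc]

theorem hasDerivAt_fpHDrift (a x : ℝ) {σ : ℝ} (hσ : 0 < σ) :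
    HasDerivAt (fun σ => fpHDrift a σ x) (fphDrift a σ x) σ := by
  have hs0 : 0 < √(2 * σ) := sqrt_pos.2 (by linarith)
  have hs2 : √(2 * σ) ^ 2 = 2 * σ := sq_sqrt (by linarith)
  have hds : HasDerivAt (fun σ => √(2 * σ)) (1 / √(2 * σ)) σ := by
    convert ((hasDerivAt_id' σ).const_mul 2).sqrt (by positivity) using 1
    field_simp
  have hw₁ : HasDerivAt (fun σ => (x - a * σ) / √(2 * σ)) _ σ :=
    (((hasDerivAt_id' σ).const_mul a).const_sub x).div hds hs0.ne'
  have hw₂ : HasDerivAt (fun σ => (x + a * σ) / √(2 * σ)) _ σ :=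
    (((hasDerivAt_id' σ).const_mul a).const_add x).div hds hs0.ne'
  have hE₁ : exp (-((x - a * σ) / √(2 * σ)) ^ 2) = exp (-(x - a * σ) ^ 2 / (2 * σ)) := by
    rw [div_pow, hs2, neg_div]
  -- the factor `exp (2 * a * x)` makes both `erfc` terms carry the same Gaussian
  have hE₂ : exp (-((x + a * σ) / √(2 * σ)) ^ 2) =
      exp (-(x - a * σ) ^ 2 / (2 * σ)) * exp (-(2 * a * x)) := by
    rw [← exp_add, div_pow, hs2]
    congr 1
    field_simp
    ring
  have hF := (((hasDerivAt_erfc _).comp σ hw₁).add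
    (((hasDerivAt_erfc _).comp σ hw₂).const_mul (exp (2 * a * x)))).const_mul (1 / 2)
  refine hF.congr_deriv ?_
  rw [hE₁, hE₂, exp_neg, fphDrift, sqrt_two_mul_pi_mul_pow_three hσ.le, hs2]
  field_simp
  ring

section LimitsOfArguments

variable (x : ℝ) {c : ℝ}

theorem add_mul_div_sqrt_two_mul {σ : ℝ} (hσ : 0 < σ) :
    (x + c * σ) / √(2 * σ) = x / √(2 * σ) + c / 2 * √(2 * σ) := by
  have hs0 : 0 < √(2 * σ) := sqrt_pos.2 (by linarith)
  have hs2 : √(2 * σ) ^ 2 = 2 * σ := sq_sqrt (by linarith)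
  rw [div_add' _ _ _ hs0.ne', mul_assoc, ← sq, hs2]
  ring

theorem tendsto_div_sqrt_two_mul_atTop : Tendsto (fun σ => x / √(2 * σ)) atTop (𝓝 0) :=
  tendsto_const_nhds.div_atTop (tendsto_sqrt_atTop.comp (tendsto_id.const_mul_atTop two_pos))

theorem tendsto_add_mul_div_sqrt_two_mul_atTop (hc : 0 < c) :
    Tendsto (fun σ => (x + c * σ) / √(2 * σ)) atTop atTop := by
  refine Tendsto.congr' (eventually_of_mem (Ioi_mem_atTop 0)
    fun σ hσ => (add_mul_div_sqrt_two_mul x hσ).symm) ?_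
  exact (tendsto_div_sqrt_two_mul_atTop x).add_atTop
    ((tendsto_sqrt_atTop.comp (tendsto_id.const_mul_atTop two_pos)).const_mul_atTop (by positivity))

theorem tendsto_sub_mul_div_sqrt_two_mul_atBot (hc : 0 < c) :
    Tendsto (fun σ => (x - c * σ) / √(2 * σ)) atTop atBot := by
  refine ((tendsto_div_sqrt_two_mul_atTop x).add_atBot
    ((tendsto_sqrt_atTop.comp (tendsto_id.const_mul_atTop two_pos)).const_mul_atTop_of_neg
      (by linarith : -c / 2 < 0))).congr' (eventually_of_mem (Ioi_mem_atTop 0) fun σ hσ => ?_)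
  dsimp only [Function.comp, id]
  rw [sub_eq_add_neg, ← neg_mul, add_mul_div_sqrt_two_mul x hσ]

end LimitsOfArguments

theorem tendsto_add_mul_div_sqrt_two_mul_nhdsGT_zero {x : ℝ} (hx : 0 < x) (c : ℝ) :
    Tendsto (fun σ => (x + c * σ) / √(2 * σ)) (𝓝[>] 0) atTop := by
  have hsqrt : Tendsto (fun σ => √(2 * σ)) (𝓝[>] 0) (𝓝[>] 0) := by
    refine tendsto_nhdsWithin_of_tendsto_nhds_of_eventually_within _ ?_
      (eventually_nhdsWithin_of_forall fun σ hσ => sqrt_pos.2 (by simp_all))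
    exact (Continuous.tendsto (by fun_prop) 0).mono_left nhdsWithin_le_nhds |>.trans (by simp)
  have hnum : Tendsto (fun σ => x + c * σ) (𝓝[>] 0) (𝓝 x) := by
    simpa using ((Continuous.tendsto (by fun_prop) 0).mono_left nhdsWithin_le_nhds :
      Tendsto (fun σ : ℝ => x + c * σ) (𝓝[>] 0) (𝓝 (x + c * 0)))
  exact hnum.pos_mul_atTop hx hsqrt.inv_tendsto_nhdsGT_zero

theorem tendsto_fpHDrift_atTop (x : ℝ) {a : ℝ} (ha : 0 < a) :
    Tendsto (fun σ => fpHDrift a σ x) atTop (𝓝 1) := by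
  have h : Tendsto (fun σ => fpHDrift a σ x) atTop (𝓝 (1 / 2 * (2 + exp (2 * a * x) * 0))) :=
    ((tendsto_erfc_atBot.comp (tendsto_sub_mul_div_sqrt_two_mul_atBot x ha)).add
      ((tendsto_erfc_atTop.comp (tendsto_add_mul_div_sqrt_two_mul_atTop x ha)).const_mul
        (exp (2 * a * x)))).const_mul (1 / 2)
  rwa [mul_zero, add_zero, one_div_mul_cancel two_ne_zero] at h

theorem tendsto_fpHDrift_nhdsGT_zero (a : ℝ) {x : ℝ} (hx : 0 < x) :
    Tendsto (fun σ => fpHDrift a σ x) (𝓝[>] 0) (𝓝 0) := by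
  have hsub : Tendsto (fun σ => (x - a * σ) / √(2 * σ)) (𝓝[>] 0) atTop := by
    simpa [sub_eq_add_neg] using tendsto_add_mul_div_sqrt_two_mul_nhdsGT_zero hx (-a)
  have h : Tendsto (fun σ => fpHDrift a σ x) (𝓝[>] 0)
      (𝓝 (1 / 2 * (0 + exp (2 * a * x) * 0))) :=
    ((tendsto_erfc_atTop.comp hsub).add
      ((tendsto_erfc_atTop.comp (tendsto_add_mul_div_sqrt_two_mul_nhdsGT_zero hx a)).const_mul
        (exp (2 * a * x)))).const_mul (1 / 2)
  rwa [mul_zero, add_zero, mul_zero] at h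

theorem integral_fphDrift {a x : ℝ} (ha : 0 < a) (hx : 0 < x) :
    ∫ σ in Ioi 0, fphDrift a σ x = 1 := by
  rw [integral_Ioi_of_hasDerivAt_of_nonneg_of_tendsto (tendsto_fpHDrift_nhdsGT_zero a hx)
    (fun σ hσ => hasDerivAt_fpHDrift a x hσ) (fun σ _ => fphDrift_nonneg a σ hx.le)
    (tendsto_fpHDrift_atTop x ha), sub_zero]

theorem fph_laplace_transform (x u : ℝ) (hx : 0 < x) (hu : 0 < u) :
    (∫ σ in Set.Ioi (0:ℝ), fph σ x * Real.exp (-u*σ)) =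
      Real.exp (x * (1 - Real.sqrt (1 + 2*u))) := by
  set a := √(1 + 2 * u)
  have ha : 0 < a := sqrt_pos.2 (by linarith)
  have hu_eq : u = (a ^ 2 - 1 ^ 2) / 2 := by
    rw [sq_sqrt (by linarith)]
    ring
  calc ∫ σ in Ioi 0, fph σ x * exp (-u * σ)
      = ∫ σ in Ioi 0, exp (x * (1 - a)) * fphDrift a σ x := by
        refine setIntegral_congr_fun measurableSet_Ioi fun σ hσ => ?_
        rw [fph_eq_fphDrift_one, hu_eq, fphDrift_mul_exp a 1 x (ne_of_gt hσ)]
    _ = exp (x * (1 - a)) := by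
        rw [integral_const_mul, integral_fphDrift ha hx, mul_one]
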